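/- arXiv:0909.4354 — 2 statements merged into one kernel-verified Lean document; each statement's English description precedes it below -/
import Mathlib

section
/- For any θ ∈ ℝ, ∫₀^{π/2 - θ} sin(τ+θ) sin τ dτ + ∫_{π/2-θ}^{π} sin(τ+θ+π) sin τ dτ = -θ cos θ. -/
open Real

lemma hasDerivAt_sin_add_mul_sin_primitive (θ τ : ℝ) :
    HasDerivAt (fun t => t * cos θ / 2 - sin (2 * t + θ) / 4) (sin (τ + θ) * sin τ) τ := by
  have hlin : HasDerivAt (fun t : ℝ => 2 * t + θ) 2 τ := by
    simpa using ((hasDerivAt_id τ).const_mul 2).add_const θ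
  have h := (((hasDerivAt_id τ).mul_const (cos θ)).div_const 2).sub
    (((hasDerivAt_sin _).comp τ hlin).div_const 4)
  refine h.congr_deriv ?_
  have product_to_sum := two_mul_sin_mul_sin (τ + θ) τ
  rw [show τ + θ - τ = θ by ring, show τ + θ + τ = 2 * τ + θ by ring] at product_to_sum
  linarith

lemma integral_sin_add_mul_sin (θ a b : ℝ) :
    ∫ τ in a..b, sin (τ + θ) * sin τ =
      (b - a) * cos θ / 2 - (sin (2 * b + θ) - sin (2 * a + θ)) / 4 := by
  rw [intervalIntegral.integral_eq_sub_of_hasDerivAt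
    (fun τ _ => hasDerivAt_sin_add_mul_sin_primitive θ τ)
    ((by fun_prop : Continuous _).intervalIntegrable _ _)]
  ring

theorem stmt_8 (θ : ℝ) :
    (∫ τ in (0:ℝ)..(π / 2 - θ), Real.sin (τ + θ) * Real.sin τ) +
        (∫ τ in (π / 2 - θ)..π, Real.sin (τ + θ + π) * Real.sin τ) =
      -θ * Real.cos θ := by
  simp only [sin_add_pi, neg_mul, intervalIntegral.integral_neg, integral_sin_add_mul_sin]
  rw [show 2 * (π / 2 - θ) + θ = π - θ by ring, sin_pi_sub, add_comm (2 * π), sin_add_two_pi,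
    mul_zero, zero_add]
  ring
end

section
/- Suppose P_ε : ℝ² → ℝ² for ε ∈ [0,1] has the form P_ε(x) = x + ε(P̄(x) + R_ε(x)), where P̄ is C¹ with P̄(x₀) = 0, the eigenvalues of the Jacobian DP̄(x₀) have negative real parts, and R_ε together with DR_ε converge to 0 uniformly on a ball around x₀ as ε → 0, with each R_ε of class C¹. Then for all sufficiently small ε > 0, P_ε has a fixed point x_ε in that ball, and x_ε → x₀ as ε → 0. -/
open Matrix

/-!
A zero of `Pbar + R ε` is a fixed point of `P ε`. No eigenvalue of `J` vanishes, so `J` is a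
linear isomorphism, and strict differentiability makes `Pbar` approximate it near `x₀` up to an
arbitrarily small Lipschitz error. For small `ε` the mean value theorem makes `R ε` Lipschitz with
a small constant on the ball and `R ε x₀` is small, so `Pbar + R ε` still approximates `J`, and the
quantitative surjectivity and antilipschitz estimates of the inverse function theorem give a zero
`x ε` with `‖x ε - x₀‖ ≤ K ‖R ε x₀‖ → 0`.
-/

open Filter Metric Topology Polynomial
open scoped NNReal

theorem Matrix.det_ne_zero_of_forall_isRoot_charpoly_re_neg {n : Type*} [Fintype n] [DecidableEq n]
    (M : Matrix n n ℝ) (h : ∀ z : ℂ, (M.map Complex.ofReal).charpoly.IsRoot z → z.re < 0) :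
    M.det ≠ 0 := by
  intro hdet
  have hdetℂ : (M.map Complex.ofReal).det = 0 :=
    (RingHom.map_det Complex.ofRealHom M).symm.trans (by simp [hdet])
  have hroot : (M.map Complex.ofReal).charpoly.IsRoot 0 := by
    simpa [IsRoot, ← coeff_zero_eq_eval_zero, hdetℂ] using
      det_eq_sign_charpoly_coeff (M.map Complex.ofReal)
  simpa using h 0 hroot

theorem TendstoUniformlyOn.eventually_lipschitzOnWith_of_fderiv
    {E F ι : Type*} [NormedAddCommGroup E] [NormedSpace ℝ E] [NormedAddCommGroup F]
    [NormedSpace ℝ F] {l : Filter ι} {g : ι → E → F} {s : Set E}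
    (hg : TendstoUniformlyOn (fun i x => fderiv ℝ (g i) x) 0 l s)
    (hdiff : ∀ᶠ i in l, ∀ x ∈ s, DifferentiableAt ℝ (g i) x) (hs : Convex ℝ s)
    {c : ℝ≥0} (hc : 0 < c) : ∀ᶠ i in l, LipschitzOnWith c (g i) s := by
  filter_upwards [hdiff, Metric.tendstoUniformlyOn_iff.mp hg c hc] with i hdiff_i hsmall
  refine hs.lipschitzOnWith_of_nnnorm_fderiv_le hdiff_i fun x hx => ?_
  have := hsmall x hx
  rw [Pi.zero_apply, dist_zero_left] at this
  exact this.le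

section

variable {𝕜 E F : Type*} [NontriviallyNormedField 𝕜] [NormedAddCommGroup E] [NormedSpace 𝕜 E]
  [NormedAddCommGroup F] [NormedSpace 𝕜 F]

theorem ApproximatesLinearOn.add_lipschitzOnWith {f g : E → F} {f' : E →L[𝕜] F} {s : Set E}
    {c c' : ℝ≥0} (hf : ApproximatesLinearOn f f' s c) (hg : LipschitzOnWith c' g s) :
    ApproximatesLinearOn (f + g) f' s (c + c') := by
  have hsub : f + g - ⇑f' = fun x => (f - ⇑f') x + g x := by
    ext x
    simp only [Pi.add_apply, Pi.sub_apply]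
    abel
  exact LipschitzOnWith.approximatesLinearOn (hsub ▸ hf.lipschitzOnWith.add hg)

theorem ApproximatesLinearOn.exists_eq_zero_mem_closedBall [CompleteSpace E] {f : E → F}
    {A : E ≃L[𝕜] F} {x₀ : E} {r : ℝ} {c : ℝ≥0}
    (hf : ApproximatesLinearOn f (A : E →L[𝕜] F) (closedBall x₀ r) c)
    (hc : c < ‖(A.symm : F →L[𝕜] E)‖₊⁻¹) (hr : 0 ≤ r)
    (hfx₀ : ‖f x₀‖ ≤ (‖(A.symm : F →L[𝕜] E)‖₊⁻¹ - c : ℝ≥0) * r) :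
    ∃ x ∈ closedBall x₀ r, f x = 0 ∧
      dist x x₀ ≤ (‖(A.symm : F →L[𝕜] E)‖₊⁻¹ - c : ℝ≥0)⁻¹ * ‖f x₀‖ := by
  have hsurj := hf.surjOn_closedBall_of_nonlinearRightInverse A.toNonlinearRightInverse hr
    subset_rfl
  obtain ⟨x, hx, hfx⟩ := hsurj (show (0 : F) ∈ _ by
    rw [mem_closedBall, dist_zero_left]
    convert hfx₀ using 3
    exact (NNReal.coe_sub hc.le).symm)
  refine ⟨x, hx, hfx, ?_⟩
  have := (hf.antilipschitz (Or.inr hc)).le_mul_dist ⟨x, hx⟩ ⟨x₀, mem_closedBall_self hr⟩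
  simpa [hfx, Subtype.dist_eq] using this

theorem HasStrictFDerivAt.exists_zero_add_of_lipschitzOnWith [CompleteSpace E] [Nontrivial E]
    {f : E → F} {A : E ≃L[𝕜] F} {x₀ : E} (hf : HasStrictFDerivAt f (A : E →L[𝕜] F) x₀)
    (hfx₀ : f x₀ = 0) {U : Set E} (hU : U ∈ 𝓝 x₀) :
    ∃ c : ℝ≥0, 0 < c ∧ ∃ ρ > 0, ∃ K : ℝ, ∀ g : E → F, LipschitzOnWith c g U → ‖g x₀‖ < ρ →
      ∃ x ∈ U, f x + g x = 0 ∧ dist x x₀ ≤ K * ‖g x₀‖ := by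
  set N := ‖(A.symm : F →L[𝕜] E)‖₊
  set c := N⁻¹ / 4
  have hN : 0 < N⁻¹ := inv_pos.2 A.nnnorm_symm_pos
  have hc : 0 < c := by positivity
  have hcc : c + c < N⁻¹ := by
    rw [show c + c = N⁻¹ / 2 by simp only [c]; ring]
    exact NNReal.half_lt_self hN.ne'
  obtain ⟨s, hs, hfs⟩ := hf.approximates_deriv_on_nhds (Or.inr hc)
  obtain ⟨r, hr, hrs⟩ := nhds_basis_closedBall.mem_iff.mp (inter_mem hs hU)
  refine ⟨c, hc, (N⁻¹ - (c + c) : ℝ≥0) * r, ?_, (N⁻¹ - (c + c) : ℝ≥0)⁻¹, fun g hg hgx₀ => ?_⟩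
  · have : 0 < N⁻¹ - (c + c) := tsub_pos_of_lt hcc
    positivity
  have happrox := ((hfs.mono_set (hrs.trans Set.inter_subset_left)).add_lipschitzOnWith
    (hg.mono (hrs.trans Set.inter_subset_right)))
  obtain ⟨x, hx, hx0, hdist⟩ := happrox.exists_eq_zero_mem_closedBall hcc hr.le
    (by simpa [hfx₀] using hgx₀.le)
  exact ⟨x, (hrs hx).2, hx0, by simpa [hfx₀] using hdist⟩

theorem HasStrictFDerivAt.exists_tendsto_zero_add [CompleteSpace E] [Nontrivial E]
    {ι : Type*} {l : Filter ι} {f : E → F} {g : ι → E → F} {A : E ≃L[𝕜] F} {x₀ : E}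
    (hf : HasStrictFDerivAt f (A : E →L[𝕜] F) x₀) (hfx₀ : f x₀ = 0) {U : Set E} (hU : U ∈ 𝓝 x₀)
    (hlip : ∀ c : ℝ≥0, 0 < c → ∀ᶠ i in l, LipschitzOnWith c (g i) U)
    (hg : Tendsto (fun i => g i x₀) l (𝓝 0)) :
    ∃ x : ι → E, (∀ᶠ i in l, x i ∈ U ∧ f (x i) + g i (x i) = 0) ∧ Tendsto x l (𝓝 x₀) := by
  obtain ⟨c, hc, ρ, hρ, K, hzero⟩ := hf.exists_zero_add_of_lipschitzOnWith hfx₀ hU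
  let p i y := y ∈ U ∧ f y + g i y = 0 ∧ dist y x₀ ≤ K * ‖g i x₀‖
  let x i := Classical.epsilon (p i)
  have hx : ∀ᶠ i in l, p i (x i) := by
    filter_upwards [hlip c hc, (tendsto_norm_zero.comp hg).eventually_lt_const hρ] with i hi hgi
    exact Classical.epsilon_spec (by simpa [p] using hzero (g i) hi hgi)
  refine ⟨x, hx.mono fun i hi => ⟨hi.1, hi.2.1⟩, tendsto_iff_dist_tendsto_zero.2 ?_⟩
  refine squeeze_zero' (Eventually.of_forall fun _ => dist_nonneg) (hx.mono fun i hi => hi.2.2) ?_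
  simpa using (tendsto_norm_zero.comp hg).const_mul K

end

theorem stmt_18 (x₀ : Fin 2 → ℝ) (δ : ℝ) (hδ : 0 < δ)
    (Pbar : (Fin 2 → ℝ) → (Fin 2 → ℝ))
    (R : ℝ → (Fin 2 → ℝ) → (Fin 2 → ℝ))
    (P : ℝ → (Fin 2 → ℝ) → (Fin 2 → ℝ))
    (J : Matrix (Fin 2) (Fin 2) ℝ)
    (hPbar : ContDiffOn ℝ 1 Pbar (Metric.ball x₀ δ))
    (hzero : Pbar x₀ = 0)
    (hJ : HasFDerivAt Pbar (J.mulVecLin.toContinuousLinearMap) x₀)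
    (heig : ∀ z : ℂ, ((J.map Complex.ofReal).charpoly).IsRoot z → z.re < 0)
    (hR : ∀ ε ∈ Set.Ioc (0:ℝ) 1, ContDiffOn ℝ 1 (R ε) (Metric.ball x₀ δ))
    (hRconv : TendstoUniformlyOn R 0 (nhdsWithin 0 (Set.Ioi 0)) (Metric.ball x₀ δ))
    (hDRconv :
      TendstoUniformlyOn (fun ε x => fderiv ℝ (R ε) x) 0 (nhdsWithin 0 (Set.Ioi 0))
        (Metric.ball x₀ δ))
    (hP : ∀ ε x, P ε x = x + ε • (Pbar x + R ε x)) :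
    ∃ xfix : ℝ → (Fin 2 → ℝ),
      (∀ᶠ ε in nhdsWithin 0 (Set.Ioi 0),
        P ε (xfix ε) = xfix ε ∧ xfix ε ∈ Metric.ball x₀ δ) ∧
        Filter.Tendsto xfix (nhdsWithin 0 (Set.Ioi 0)) (nhds x₀) := by
  have hdet := J.det_ne_zero_of_forall_isRoot_charpoly_re_neg heig
  let A : (Fin 2 → ℝ) ≃L[ℝ] (Fin 2 → ℝ) :=
    (J.toLinearEquiv' (J.invertibleOfIsUnitDet hdet.isUnit)).toContinuousLinearEquiv
  have hball : ball x₀ δ ∈ 𝓝 x₀ := ball_mem_nhds x₀ hδ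
  have hstrict : HasStrictFDerivAt Pbar (A : (Fin 2 → ℝ) →L[ℝ] (Fin 2 → ℝ)) x₀ := by
    have := (hPbar.contDiffAt hball).hasStrictFDerivAt one_ne_zero
    rwa [hJ.fderiv] at this
  have hdiff : ∀ᶠ ε in 𝓝[>] (0 : ℝ), ∀ x ∈ ball x₀ δ, DifferentiableAt ℝ (R ε) x :=
    mem_of_superset (Ioc_mem_nhdsGT one_pos) fun ε hε x hx =>
      ((hR ε hε).differentiableOn one_ne_zero x hx).differentiableAt (isOpen_ball.mem_nhds hx)
  obtain ⟨xfix, hfix, hlim⟩ := hstrict.exists_tendsto_zero_add hzero hball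
    (fun c hc => hDRconv.eventually_lipschitzOnWith_of_fderiv hdiff (convex_ball x₀ δ) hc)
    (by simpa using hRconv.tendsto_at (mem_ball_self hδ))
  refine ⟨xfix, hfix.mono fun ε ⟨hmem, hroot⟩ => ⟨?_, hmem⟩, hlim⟩
  rw [hP, hroot, smul_zero, add_zero]
end
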